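/- Let Σ = ⟨Γ_O, Γ_V, Δ⟩ be an ER specification over a schema S such that no denial constraint in Δ contains inequality atoms, let D be an S-database, and let ⟨E,V⟩ ∈ Sol(D,Σ). Call a pair α soft-applicable at ⟨E,V⟩ if α ∉ E ∪ V and either α = (o,o') with (o,o') ∈ q(D_{E,V}) for some soft rule q(x,y) ⇢ EqO(x,y) ∈ Γ_s^o, or α = (⟨t,i⟩,⟨t',i'⟩) with (t,t') ∈ q(D_{E,V}) for some soft rule q(x_t,y_t) ⇢ EqV(⟨x_t,i⟩,⟨y_t,i'⟩) ∈ Γ_s^v. Then ⟨E,V⟩ ∈ MaxSol(D,Σ) if and only if for every soft-applicable pair α at ⟨E,V⟩, the hard closure ⟨E_α,V_α⟩ of the candidate solution obtained from ⟨E,V⟩ by adding α (namely ⟨EqRel(E ∪ {α}, Obj(D)), V⟩ if α is a pair of objects, and ⟨E, EqRel(V ∪ {α}, Cells(D))⟩ if α is a pair of cells) satisfies D_{E_α,V_α} ⊭ Δ. -/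

import Mathlib

namespace LacePlus

/-! ### Constants -/

/-- Sorts of constants: objects, values, tuple identifiers. -/
inductive CKind
  | obj | val | tid
deriving DecidableEq

/-- Constants: three pairwise disjoint infinite sets (objects, values, tids),
each indexed by the natural numbers. -/
structure Const where
  kind : CKind
  id : ℕ
deriving DecidableEq

/-- A (value) cell: a tuple id together with a position. -/
abbrev Cell := ℕ × ℕ

abbrev ERel := Set (Const × Const)
abbrev VRel := Set (Cell × Cell)

/-- A family of binary similarity predicates on constants. -/
abbrev SimFam := ℕ → Const → Const → Prop

def tidC (t : ℕ) : Const := ⟨CKind.tid, t⟩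

/-! ### Schemas and databases -/

/-- A database schema: a finite set of relation symbols (coded by naturals),
each with an arity and a type vector (`isObjPos R i = true` iff position `i`
of `R` is an object position). -/
structure Schema where
  rels : Finset ℕ
  arity : ℕ → ℕ
  isObjPos : ℕ → ℕ → Bool

/-- A fact `R(t, c₁, …, c_k)`. -/
structure Fact where
  rel : ℕ
  tid : ℕ
  args : List Const
deriving DecidableEq

/-- The constant in position `i ∈ {1,…,k}` of a fact. -/
def Fact.arg (f : Fact) (i : ℕ) : Option Const :=
  if i = 0 then none else f.args[i - 1]?

/-- A (TID-annotated) `S`-database: a finite set of facts, with relation symbols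
from `S`, correct arities, and each tid occurring in at most one fact. -/
structure DB (S : Schema) where
  facts : Finset Fact
  rels_mem : ∀ f ∈ facts, f.rel ∈ S.rels
  arity_eq : ∀ f ∈ facts, f.args.length = S.arity f.rel
  tid_unique : ∀ f ∈ facts, ∀ f' ∈ facts, f.tid = f'.tid → f = f'

/-- `Dom(D)`: the constants occurring in `D`. -/
def DomD {S : Schema} (D : DB S) : Set Const :=
  {c | ∃ f ∈ D.facts, c ∈ f.args}

/-- `Obj(D)`: the constants occurring in object positions of `D` (w.r.t. `S`). -/
def ObjD (S : Schema) (D : DB S) : Set Const :=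
  {c | ∃ f ∈ D.facts, ∃ i, S.isObjPos f.rel i = true ∧ f.arg i = some c}

/-- `Cells(D)`: the value cells of `D` (w.r.t. `S`). -/
def CellsD (S : Schema) (D : DB S) : Set Cell :=
  {p | ∃ f ∈ D.facts, f.tid = p.1 ∧ 1 ≤ p.2 ∧ p.2 ≤ S.arity f.rel ∧
        S.isObjPos f.rel p.2 = false}

/-- `t[i] = c` in `D`. -/
def DB.HasVal {S : Schema} (D : DB S) (t i : ℕ) (c : Const) : Prop :=
  ∃ f ∈ D.facts, f.tid = t ∧ f.arg i = some c

/-- `D` is well-typed over `S`: object positions hold object constants and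
value positions hold value constants. -/
def WellTyped (S : Schema) (D : DB S) : Prop :=
  ∀ f ∈ D.facts, ∀ i c, f.arg i = some c →
    (S.isObjPos f.rel i = true → c.kind = CKind.obj) ∧
    (S.isObjPos f.rel i = false → c.kind = CKind.val)

/-! ### Equivalence relations -/

/-- `R` is an equivalence relation on the set `X` (as set of pairs). -/
def IsEquivOn {α : Type} (X : Set α) (R : Set (α × α)) : Prop :=
  R ⊆ X ×ˢ X ∧ (∀ x ∈ X, (x, x) ∈ R) ∧
  (∀ x y, (x, y) ∈ R → (y, x) ∈ R) ∧
  (∀ x y z, (x, y) ∈ R → (y, z) ∈ R → (x, z) ∈ R)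

/-- `EqRel(P, X)`: the smallest equivalence relation on `X` extending `P`. -/
def EqRel {α : Type} (P : Set (α × α)) (X : Set α) : Set (α × α) :=
  ⋂₀ {R | IsEquivOn X R ∧ P ⊆ R}

/-! ### Queries -/

inductive Term
  | var (v : ℕ)
  | const (c : Const)
deriving DecidableEq

/-- Atoms: relational atoms `R(u₀,u₁,…,u_k)` (with `u₀` a tid term),
similarity atoms `u ≈ₛ u'`, and inequality atoms `u ≠ u'`. -/
inductive Atom
  | rel (R : ℕ) (ts : List Term)
  | sim (s : ℕ) (u u' : Term)
  | neq (u u' : Term)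
deriving DecidableEq

def Atom.terms : Atom → List Term
  | .rel _ ts => ts
  | .sim _ u u' => [u, u']
  | .neq u u' => [u, u']

def Atom.isRel : Atom → Prop
  | .rel _ _ => True
  | _ => False

def Atom.isSim : Atom → Prop
  | .sim _ _ _ => True
  | _ => False

def Atom.isNeq : Atom → Prop
  | .neq _ _ => True
  | _ => False

/-- The (Boolean) query contains no inequality atoms. -/
def NoNeq (q : List Atom) : Prop := ∀ a ∈ q, ¬ a.isNeq

def OccursVar (q : List Atom) (v : ℕ) : Prop := ∃ a ∈ q, Term.var v ∈ a.terms

/-! ### Induced extended databases and query satisfaction (Definition 3) -/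

/-- The set of constants in position `i ≥ 1` of fact `f` in the extended
database `D_{E,W}`: the `E`-class of `f`'s `i`-th constant for object
positions, and the set of values of `W`-related cells for value positions. -/
def extArg {S : Schema} (D : DB S) (E : ERel) (W : VRel) (f : Fact) (i : ℕ) : Set Const :=
  if S.isObjPos f.rel i = true then
    {o' | ∃ o, f.arg i = some o ∧ (o, o') ∈ E}
  else
    {c | ∃ p : Cell, ((f.tid, i), p) ∈ W ∧ D.HasVal p.1 p.2 c}

/-- Requirement 2 of Definition 3, for a single relational atom with
assignment `g` to its positions. -/
def SatRelAtom {S : Schema} (D : DB S) (E : ERel) (W : VRel)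
    (g : ℕ → Set Const) (R : ℕ) (ts : List Term) : Prop :=
  ∃ f ∈ D.facts, f.rel = R ∧ ts.length = S.arity R + 1 ∧
    g 0 = {tidC f.tid} ∧
    (∀ i, 1 ≤ i → i ≤ S.arity R → g i = extArg D E W f i) ∧
    (∀ i c, ts[i]? = some (Term.const c) → c ∈ g i)

/-- The function `h` determined by the family `g` (Requirement 1 of
Definition 3): `h(a) = {a}` for constants, and for a variable the
intersection of the `g j i` over all its occurrences in relational atoms. -/
def hTerm (q : List Atom) (g : ℕ → ℕ → Set Const) : Term → Set Const
  | .const c => {c}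
  | .var v => {c | ∀ j R ts, q[j]? = some (Atom.rel R ts) →
      ∀ i, ts[i]? = some (Term.var v) → c ∈ g j i}

/-- `D_{E,W} ⊨ q` for a Boolean query `q` (Definition 3). -/
def Sat (sim : SimFam) {S : Schema} (D : DB S) (E : ERel) (W : VRel)
    (q : List Atom) : Prop :=
  ∃ g : ℕ → ℕ → Set Const,
    (∀ v, OccursVar q v → (hTerm q g (Term.var v)).Nonempty) ∧
    (∀ j R ts, q[j]? = some (Atom.rel R ts) → SatRelAtom D E W (g j) R ts) ∧
    (∀ (j : ℕ) u u', q[j]? = some (Atom.neq u u') → hTerm q g u ∩ hTerm q g u' = ∅) ∧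
    (∀ (j : ℕ) s u u', q[j]? = some (Atom.sim s u u') →
      ∃ c ∈ hTerm q g u, ∃ c' ∈ hTerm q g u', sim s c c')

/-! ### Substitution and answers -/

def Term.subst (σ : ℕ → Option Const) : Term → Term
  | .var v =>
    match σ v with
    | some c => .const c
    | none => .var v
  | .const c => .const c

def Atom.subst (σ : ℕ → Option Const) : Atom → Atom
  | .rel R ts => .rel R (ts.map (Term.subst σ))
  | .sim s u u' => .sim s (u.subst σ) (u'.subst σ)
  | .neq u u' => .neq (u.subst σ) (u'.subst σ)

def substQ (q : List Atom) (σ : ℕ → Option Const) : List Atom :=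
  q.map (Atom.subst σ)

def pairSubst (x y : ℕ) (a b : Const) : ℕ → Option Const :=
  fun v => if v = x then some a else if v = y then some b else none

/-- An `n`-ary conjunctive query: a list of atoms together with its tuple
of free (answer) variables. -/
structure CQ where
  atoms : List Atom
  free : List ℕ

/-- `q[c⃗]`: the Boolean query obtained by substituting the tuple `cs`
for the free variables of `q`. -/
def CQ.substTuple (q : CQ) (cs : List Const) : List Atom :=
  substQ q.atoms (fun v => (q.free.findIdx? (fun w => w = v)).bind fun k => cs[k]?)

/-! ### Rules and specifications -/

/-- A rule for objects, `q(x,y) → EqO(x,y)`. -/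
structure ObjRule where
  body : List Atom
  x : ℕ
  y : ℕ
deriving DecidableEq

/-- A rule for values, `q(x_t,y_t) → EqV(⟨x_t,i⟩,⟨y_t,j⟩)`. -/
structure ValRule where
  body : List Atom
  xt : ℕ
  yt : ℕ
  i : ℕ
  j : ℕ
deriving DecidableEq

/-- `(o,o') ∈ q(D_{E,W})` for the body of an object rule. -/
def AnswerO (sim : SimFam) {S : Schema} (D : DB S) (E : ERel) (W : VRel)
    (r : ObjRule) (o o' : Const) : Prop :=
  Sat sim D E W (substQ r.body (pairSubst r.x r.y o o'))

/-- `(t,t') ∈ q(D_{E,W})` for the body of a value rule. -/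
def AnswerV (sim : SimFam) {S : Schema} (D : DB S) (E : ERel) (W : VRel)
    (r : ValRule) (t t' : ℕ) : Prop :=
  Sat sim D E W (substQ r.body (pairSubst r.xt r.yt (tidC t) (tidC t')))

/-- `D_{E,W}` satisfies the object rule `r`: `q(D_{E,W}) ⊆ E`. -/
def SatObjRule (sim : SimFam) {S : Schema} (D : DB S) (E : ERel) (W : VRel)
    (r : ObjRule) : Prop :=
  ∀ o o', AnswerO sim D E W r o o' → (o, o') ∈ E

/-- `D_{E,W}` satisfies the value rule `r`. -/
def SatValRule (sim : SimFam) {S : Schema} (D : DB S) (E : ERel) (W : VRel)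
    (r : ValRule) : Prop :=
  ∀ t t', AnswerV sim D E W r t t' → ((t, r.i), (t', r.j)) ∈ W

/-- A LACE⁺ ER specification `Σ = ⟨Γ_O, Γ_V, Δ⟩` (hard/soft rules for objects,
hard/soft rules for values, denial constraints). -/
structure ERSpec where
  hardO : List ObjRule
  softO : List ObjRule
  hardV : List ValRule
  softV : List ValRule
  dcs : List (List Atom)

/-! ### Well-formedness -/

/-- Variable `v` occurs only in object positions (w.r.t. `S`) of the
relational atoms of `q`. -/
def OnlyObjPos (S : Schema) (q : List Atom) (v : ℕ) : Prop :=
  ∀ a ∈ q,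
    (∀ R ts, a = Atom.rel R ts → ∀ i, ts[i]? = some (Term.var v) →
      1 ≤ i ∧ i ≤ S.arity R ∧ S.isObjPos R i = true) ∧
    (¬ a.isRel → Term.var v ∉ a.terms)

/-- A well-formed rule for objects: no inequality atoms, and the free
variables occur, and occur only in object positions. -/
def ObjRule.WF (S : Schema) (r : ObjRule) : Prop :=
  NoNeq r.body ∧ OccursVar r.body r.x ∧ OccursVar r.body r.y ∧
  OnlyObjPos S r.body r.x ∧ OnlyObjPos S r.body r.y

/-- `v` occurs exactly once in `q`, namely at position 0 of the relational
atom number `jx`, whose relation symbol is `Rx`. -/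
def UniqueTidOcc (q : List Atom) (v : ℕ) (jx Rx : ℕ) : Prop :=
  (∃ ts, q[jx]? = some (Atom.rel Rx ts) ∧ ts[0]? = some (Term.var v)) ∧
  (∀ j R ts, q[j]? = some (Atom.rel R ts) → ∀ p, ts[p]? = some (Term.var v) →
    j = jx ∧ p = 0) ∧
  (∀ a ∈ q, ¬ a.isRel → Term.var v ∉ a.terms)

/-- A well-formed rule for values: no inequality atoms, `x_t` and `y_t` each
occur exactly once, at position 0 of relational atoms with relations `R_x`,
`R_y`, and `i`, `j` are value positions of `R_x`, `R_y`. -/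
def ValRule.WF (S : Schema) (r : ValRule) : Prop :=
  NoNeq r.body ∧
  ∃ jx Rx jy Ry, UniqueTidOcc r.body r.xt jx Rx ∧ UniqueTidOcc r.body r.yt jy Ry ∧
    1 ≤ r.i ∧ r.i ≤ S.arity Rx ∧ S.isObjPos Rx r.i = false ∧
    1 ≤ r.j ∧ r.j ≤ S.arity Ry ∧ S.isObjPos Ry r.j = false

/-- A well-formed denial constraint: a Boolean CQ with inequality atoms
(no similarity atoms), safe: each variable of an inequality atom occurs in
some relational atom. -/
def DCWF (δ : List Atom) : Prop :=
  (∀ a ∈ δ, ¬ a.isSim) ∧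
  (∀ a ∈ δ, ∀ u u', a = Atom.neq u u' →
    ∃ v v', u = Term.var v ∧ u' = Term.var v' ∧
      (∃ b ∈ δ, ∃ R ts, b = Atom.rel R ts ∧ Term.var v ∈ ts) ∧
      (∃ b ∈ δ, ∃ R ts, b = Atom.rel R ts ∧ Term.var v' ∈ ts))

/-- Well-formed ER specification over `S`. -/
def ERSpec.WF (S : Schema) (Sp : ERSpec) : Prop :=
  (∀ r ∈ Sp.hardO, r.WF S) ∧ (∀ r ∈ Sp.softO, r.WF S) ∧
  (∀ r ∈ Sp.hardV, r.WF S) ∧ (∀ r ∈ Sp.softV, r.WF S) ∧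
  (∀ δ ∈ Sp.dcs, DCWF δ)

/-! ### Candidate solutions and solutions (Definition 4) -/

inductive CandSol (sim : SimFam) {S : Schema} (D : DB S) (Sp : ERSpec) :
    ERel → VRel → Prop
  | base : CandSol sim D Sp (EqRel ∅ (ObjD S D)) (EqRel ∅ (CellsD S D))
  | stepO {E : ERel} {W : VRel} {o o' : Const} (r : ObjRule) :
      r ∈ Sp.hardO ∨ r ∈ Sp.softO → CandSol sim D Sp E W →
      AnswerO sim D E W r o o' →
      CandSol sim D Sp (EqRel (E ∪ {(o, o')}) (ObjD S D)) W
  | stepV {E : ERel} {W : VRel} {t t' : ℕ} (r : ValRule) :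
      r ∈ Sp.hardV ∨ r ∈ Sp.softV → CandSol sim D Sp E W →
      AnswerV sim D E W r t t' →
      CandSol sim D Sp E (EqRel (W ∪ {((t, r.i), (t', r.j))}) (CellsD S D))

/-- `D_{E,W}` satisfies all hard rules of `Sp`. -/
def SatHard (sim : SimFam) {S : Schema} (D : DB S) (Sp : ERSpec)
    (E : ERel) (W : VRel) : Prop :=
  (∀ r ∈ Sp.hardO, SatObjRule sim D E W r) ∧
  (∀ r ∈ Sp.hardV, SatValRule sim D E W r)

/-- `⟨E,W⟩ ∈ Sol(D,Σ)`: a candidate solution whose induced database satisfies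
all hard rules and all denial constraints. -/
def Solution (sim : SimFam) {S : Schema} (D : DB S) (Sp : ERSpec)
    (E : ERel) (W : VRel) : Prop :=
  CandSol sim D Sp E W ∧ SatHard sim D Sp E W ∧
  (∀ δ ∈ Sp.dcs, ¬ Sat sim D E W δ)

/-- `⟨E,W⟩ ∈ MaxSol(D,Σ)`: a solution such that no solution `⟨E',W'⟩`
satisfies `E ∪ V ⊊ E' ∪ V'`. -/
def MaxSolution (sim : SimFam) {S : Schema} (D : DB S) (Sp : ERSpec)
    (E : ERel) (W : VRel) : Prop :=
  Solution sim D Sp E W ∧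
  ¬ ∃ E' W', Solution sim D Sp E' W' ∧ E ⊆ E' ∧ W ⊆ W' ∧ ¬ (E' ⊆ E ∧ W' ⊆ W)

/-! ### Hard closure -/

/-- `⟨Eh,Wh⟩` is the hard closure of the candidate solution `⟨E0,W0⟩`:
the least candidate solution extending `⟨E0,W0⟩` that satisfies all hard
rules. -/
def IsHardClosure (sim : SimFam) {S : Schema} (D : DB S) (Sp : ERSpec)
    (E0 : ERel) (W0 : VRel) (Eh : ERel) (Wh : VRel) : Prop :=
  CandSol sim D Sp Eh Wh ∧ E0 ⊆ Eh ∧ W0 ⊆ Wh ∧ SatHard sim D Sp Eh Wh ∧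
  ∀ E W, CandSol sim D Sp E W → E0 ⊆ E → W0 ⊆ W → SatHard sim D Sp E W →
    Eh ⊆ E ∧ Wh ⊆ W

/-! ### The simulation construction -/

/-- The schema `S_V`: `S` with all object positions changed to value
positions. -/
def Schema.toValSchema (S : Schema) : Schema :=
  { rels := S.rels, arity := S.arity, isObjPos := fun _ _ => false }

/-- `D^V`: the database `D` viewed as an `S_V`-database (all object constants
treated as value constants). -/
def DB.toVal {S : Schema} (D : DB S) : DB S.toValSchema :=
  { facts := D.facts
    rels_mem := D.rels_mem
    arity_eq := D.arity_eq
    tid_unique := D.tid_unique }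

/-- `V_E`: the pairs of cells `(⟨t,i⟩,⟨t',j⟩)` with `(t[i],t'[j]) ∈ E`. -/
def VE {S : Schema} (D : DB S) (E : ERel) : VRel :=
  {p | ∃ c c', D.HasVal p.1.1 p.1.2 c ∧ D.HasVal p.2.1 p.2.2 c' ∧ (c, c') ∈ E}

/-- `r'` is a translation of the object rule `r` into a rule for values:
same body, and the head cells `⟨x_t,i⟩`, `⟨y_t,j⟩` are positions of atoms of
the body containing `x` and `y`, with `x_t`, `y_t` the corresponding tid
variables. -/
def IsObjToValRule (r : ObjRule) (r' : ValRule) : Prop :=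
  r'.body = r.body ∧
  (∃ jx : ℕ, ∃ Rx ts, r.body[jx]? = some (Atom.rel Rx ts) ∧
    ts[0]? = some (Term.var r'.xt) ∧ ts[r'.i]? = some (Term.var r.x) ∧ 1 ≤ r'.i) ∧
  (∃ jy : ℕ, ∃ Ry ts, r.body[jy]? = some (Atom.rel Ry ts) ∧
    ts[0]? = some (Term.var r'.yt) ∧ ts[r'.j]? = some (Term.var r.y) ∧ 1 ≤ r'.j)

/-- The hard rule of `Γ_global` for relations `P`, `P'` and (object)
positions `i` of `P` and `j` of `P'`:
`P(x_t,u₁,…,z,…,u_k) ∧ P'(y_t,v₁,…,z,…,v_ℓ) ⇒ EqV(⟨x_t,i⟩,⟨y_t,j⟩)`,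
with `x_t, y_t, z` and all the `u`'s and `v`'s pairwise distinct variables. -/
def globalRule (S : Schema) (P P' i j : ℕ) : ValRule :=
  { body := [Atom.rel P (Term.var 0 ::
        (List.range (S.arity P)).map fun p =>
          if p + 1 = i then Term.var 2 else Term.var (3 + p)),
      Atom.rel P' (Term.var 1 ::
        (List.range (S.arity P')).map fun p =>
          if p + 1 = j then Term.var 2 else Term.var (3 + S.arity P + p))]
    xt := 0, yt := 1, i := i, j := j }

/-- `Sp'` is (a) `Σ' = ⟨∅, Γ_V ∪ Γ_{O⇝V} ∪ Γ_global, Δ⟩` obtained from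
`Sp = ⟨Γ_O, Γ_V, Δ⟩` by the simulation construction. -/
structure IsSimSpec (S : Schema) (Sp Sp' : ERSpec) : Prop where
  hardO_nil : Sp'.hardO = []
  softO_nil : Sp'.softO = []
  dcs_eq : Sp'.dcs = Sp.dcs
  hardV_sub : ∀ r ∈ Sp.hardV, r ∈ Sp'.hardV
  softV_sub : ∀ r ∈ Sp.softV, r ∈ Sp'.softV
  hardO_trans : ∀ r ∈ Sp.hardO, ∃ r' ∈ Sp'.hardV, IsObjToValRule r r'
  softO_trans : ∀ r ∈ Sp.softO, ∃ r' ∈ Sp'.softV, IsObjToValRule r r'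
  global_mem : ∀ P ∈ S.rels, ∀ P' ∈ S.rels, ∀ i j,
    1 ≤ i → i ≤ S.arity P → S.isObjPos P i = true →
    1 ≤ j → j ≤ S.arity P' → S.isObjPos P' j = true →
    globalRule S P P' i j ∈ Sp'.hardV
  hardV_only : ∀ r' ∈ Sp'.hardV, r' ∈ Sp.hardV ∨
    (∃ r ∈ Sp.hardO, IsObjToValRule r r') ∨
    (∃ P P' i j, P ∈ S.rels ∧ P' ∈ S.rels ∧
      1 ≤ i ∧ i ≤ S.arity P ∧ S.isObjPos P i = true ∧
      1 ≤ j ∧ j ≤ S.arity P' ∧ S.isObjPos P' j = true ∧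
      r' = globalRule S P P' i j)
  softV_only : ∀ r' ∈ Sp'.softV, r' ∈ Sp.softV ∨
    ∃ r ∈ Sp.softO, IsObjToValRule r r'

/-- A cell of `D^V` holding an object constant of the original database. -/
def IsObjCell {S : Schema} (D : DB S) (p : Cell) : Prop :=
  ∃ c, D.HasVal p.1 p.2 c ∧ c.kind = CKind.obj

/-- A cell of `D^V` holding a value constant of the original database. -/
def IsValCell {S : Schema} (D : DB S) (p : Cell) : Prop :=
  ∃ c, D.HasVal p.1 p.2 c ∧ c.kind = CKind.val

end LacePlus

namespace LacePlus

/-- `α` is soft-applicable at `⟨E,V⟩`: `α ∉ E ∪ V` and `α` is derived by some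
soft rule evaluated over `D_{E,V}`. -/
def SoftApplicable (sim : SimFam) {S : Schema} (D : DB S) (Sp : ERSpec)
    (E : ERel) (W : VRel) : (Const × Const) ⊕ (Cell × Cell) → Prop
  | .inl p => p ∉ E ∧ ∃ r ∈ Sp.softO, AnswerO sim D E W r p.1 p.2
  | .inr p => p ∉ W ∧ ∃ r ∈ Sp.softV, ∃ t t',
      AnswerV sim D E W r t t' ∧ p = ((t, r.i), (t', r.j))

/-- The candidate solution obtained from `⟨E,V⟩` by adding the pair `α`. -/
def extendBy (S : Schema) (D : DB S) (E : ERel) (W : VRel) :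
    (Const × Const) ⊕ (Cell × Cell) → ERel × VRel
  | .inl p => (EqRel (E ∪ {p}) (ObjD S D), W)
  | .inr p => (E, EqRel (W ∪ {p}) (CellsD S D))

/-!
Since no query involved has inequality atoms, satisfaction of rule bodies and of denial
constraints is monotone in `⟨E,V⟩`. If the hard closure of `⟨E,V⟩` plus a soft-applicable
`α` violated no denial constraint, it would be a solution strictly above `⟨E,V⟩`.
Conversely, the derivation of a solution strictly above `⟨E,V⟩` must leave `⟨E,V⟩` at a
step that is soft-applicable at `⟨E,V⟩` (the hard rules hold there already); the hard
closure of `⟨E,V⟩` plus that step lies below the larger solution, so by monotonicity it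
violates no denial constraint either. Hard closures exist because candidate solutions range
over the finitely many equivalence closures on `Obj(D)` and `Cells(D)`.
-/

section EqRel

variable {α : Type}

lemma subset_eqRel (P : Set (α × α)) (X : Set α) : P ⊆ EqRel P X :=
  fun _ hp => Set.mem_sInter.2 fun _ hR => hR.2 hp

lemma eqRel_subset_eqRel {P Q : Set (α × α)} {X : Set α} (h : Q ⊆ EqRel P X) :
    EqRel Q X ⊆ EqRel P X :=
  Set.subset_sInter fun _ hR =>
    Set.sInter_subset_of_mem ⟨hR.1, h.trans (Set.sInter_subset_of_mem hR)⟩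

lemma isEquivOn_prod (X : Set α) : IsEquivOn X (X ×ˢ X) :=
  ⟨subset_rfl, fun _ hx => ⟨hx, hx⟩, fun _ _ h => ⟨h.2, h.1⟩,
    fun _ _ _ h1 h2 => ⟨h1.1, h2.2⟩⟩

/-- When `P ⊄ X × X` no equivalence relation on `X` extends `P`, and the empty
intersection makes `EqRel P X` everything. -/
lemma eqRel_subset_prod_or_eq_univ (P : Set (α × α)) (X : Set α) :
    EqRel P X ⊆ X ×ˢ X ∨ EqRel P X = Set.univ := by
  by_cases hP : P ⊆ X ×ˢ X
  · exact Or.inl (Set.sInter_subset_of_mem ⟨isEquivOn_prod X, hP⟩)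
  · exact Or.inr (Set.sInter_eq_univ.2 fun _ hR => absurd (hR.2.trans hR.1.1) hP)

lemma finite_range_eqRel {X : Set α} (hX : X.Finite) :
    (Set.range fun P => EqRel P X).Finite := by
  refine (((hX.prod hX).powerset).insert Set.univ).subset ?_
  rintro _ ⟨P, rfl⟩
  rcases eqRel_subset_prod_or_eq_univ P X with h | h
  · exact Or.inr h
  · exact Or.inl h

end EqRel

lemma finite_objD {S : Schema} (D : DB S) : (ObjD S D).Finite := by
  refine (D.facts.finite_toSet.biUnion fun f _ => f.args.finite_toSet).subset ?_
  rintro c ⟨f, hf, i, -, harg⟩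
  refine Set.mem_biUnion hf ?_
  unfold Fact.arg at harg
  split at harg
  · exact absurd harg (by simp)
  · exact List.mem_of_getElem? harg

lemma finite_cellsD {S : Schema} (D : DB S) : (CellsD S D).Finite := by
  refine (D.facts.finite_toSet.biUnion fun f _ =>
    (Set.finite_singleton f.tid).prod (Set.finite_Iic (S.arity f.rel))).subset ?_
  rintro p ⟨f, hf, htid, -, harity, -⟩
  exact Set.mem_biUnion hf ⟨htid.symm, harity⟩

section Monotone

variable {sim : SimFam} {S : Schema} {D : DB S} {E E' : ERel} {W W' : VRel}

lemma extArg_mono (hE : E ⊆ E') (hW : W ⊆ W') (f : Fact) (i : ℕ) :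
    extArg D E W f i ⊆ extArg D E' W' f i := by
  unfold extArg
  split
  · rintro c ⟨o, h1, h2⟩; exact ⟨o, h1, hE h2⟩
  · rintro c ⟨p, h1, h2⟩; exact ⟨p, hW h1, h2⟩

lemma SatRelAtom.mono {g : ℕ → Set Const} {R : ℕ} {ts : List Term}
    (h : SatRelAtom D E W g R ts) (hE : E ⊆ E') (hW : W ⊆ W') :
    ∃ g', SatRelAtom D E' W' g' R ts ∧ ∀ i, g i ⊆ g' i := by
  obtain ⟨f, hf, hrel, hlen, h0, hmid, hconst⟩ := h
  classical
  let g' : ℕ → Set Const := fun i =>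
    if 1 ≤ i ∧ i ≤ S.arity R then extArg D E' W' f i else g i
  have hg : ∀ i, g i ⊆ g' i := by
    intro i
    by_cases hi : 1 ≤ i ∧ i ≤ S.arity R
    · simp only [g', if_pos hi, hmid i hi.1 hi.2]
      exact extArg_mono hE hW f i
    · simp only [g', if_neg hi, subset_rfl]
  refine ⟨g', ⟨f, hf, hrel, hlen, ?_, fun i h1 h2 => if_pos ⟨h1, h2⟩,
    fun i c hc => hg i (hconst i c hc)⟩, hg⟩
  simp [g', h0]

lemma hTerm_mono {q : List Atom} {g g' : ℕ → ℕ → Set Const} (hg : ∀ j i, g j i ⊆ g' j i)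
    (u : Term) : hTerm q g u ⊆ hTerm q g' u := by
  cases u with
  | const c => exact subset_rfl
  | var v => exact fun c hc j R ts hj i hi => hg j i (hc j R ts hj i hi)

/-- Without inequality atoms, enlarging `E` and `W` only enlarges the sets
`g_π(i)` and hence every `h(u)`. -/
lemma Sat.mono {q : List Atom} (hq : NoNeq q) (h : Sat sim D E W q) (hE : E ⊆ E')
    (hW : W ⊆ W') : Sat sim D E' W' q := by
  obtain ⟨g, hne, hrel, -, hsim⟩ := h
  have hwiden : ∀ j, ∃ gj : ℕ → Set Const, (∀ R ts, q[j]? = some (Atom.rel R ts) →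
      SatRelAtom D E' W' gj R ts) ∧ ∀ i, g j i ⊆ gj i := by
    intro j
    by_cases hj : ∃ R ts, q[j]? = some (Atom.rel R ts)
    · obtain ⟨R, ts, hqj⟩ := hj
      obtain ⟨gj, hsat, hsub⟩ := (hrel j R ts hqj).mono hE hW
      refine ⟨gj, fun R' ts' hqj' => ?_, hsub⟩
      obtain ⟨rfl, rfl⟩ : R = R' ∧ ts = ts' := by simpa [hqj] using hqj'
      exact hsat
    · exact ⟨g j, fun R ts hqj => absurd ⟨R, ts, hqj⟩ hj, fun _ => subset_rfl⟩
  choose g' hrel' hsub using hwiden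
  have hh := hTerm_mono (q := q) hsub
  refine ⟨g', fun v hv => (hne v hv).mono (hh _), hrel', fun j u u' hqj => ?_,
    fun j s u u' hqj => ?_⟩
  · exact absurd trivial (hq _ (List.mem_of_getElem? hqj))
  · obtain ⟨c, hc, c', hc', hs⟩ := hsim j s u u' hqj
    exact ⟨c, hh u hc, c', hh u' hc', hs⟩

lemma noNeq_substQ {q : List Atom} (hq : NoNeq q) (σ : ℕ → Option Const) :
    NoNeq (substQ q σ) := by
  intro a ha
  obtain ⟨b, hb, rfl⟩ := List.mem_map.1 ha
  cases b with
  | neq u u' => exact absurd trivial (hq _ hb)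
  | _ => simp [Atom.subst, Atom.isNeq]

end Monotone

abbrev Merge := (Const × Const) ⊕ (Cell × Cell)

def Merged (E : ERel) (W : VRel) : Merge → Prop
  | .inl p => p ∈ E
  | .inr p => p ∈ W

def Derives (sim : SimFam) {S : Schema} (D : DB S) (E : ERel) (W : VRel)
    (OR : List ObjRule) (VR : List ValRule) : Merge → Prop
  | .inl p => ∃ r ∈ OR, AnswerO sim D E W r p.1 p.2
  | .inr p => ∃ r ∈ VR, ∃ t t', AnswerV sim D E W r t t' ∧ p = ((t, r.i), (t', r.j))

section Merge

variable {sim : SimFam} {S : Schema} {D : DB S} {Sp : ERSpec} {E E' : ERel} {W W' : VRel}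
  {OR : List ObjRule} {VR : List ValRule} {α : Merge}

lemma Merged.mono (h : Merged E W α) (hE : E ⊆ E') (hW : W ⊆ W') : Merged E' W' α := by
  cases α
  exacts [hE h, hW h]

lemma Derives.mono (h : Derives sim D E W OR VR α) (hOR : ∀ r ∈ OR, NoNeq r.body)
    (hVR : ∀ r ∈ VR, NoNeq r.body) (hE : E ⊆ E') (hW : W ⊆ W') :
    Derives sim D E' W' OR VR α := by
  cases α with
  | inl p =>
    obtain ⟨r, hr, hans⟩ := h
    exact ⟨r, hr, Sat.mono (noNeq_substQ (hOR r hr) _) hans hE hW⟩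
  | inr p =>
    obtain ⟨r, hr, t, t', hans, rfl⟩ := h
    exact ⟨r, hr, t, t', Sat.mono (noNeq_substQ (hVR r hr) _) hans hE hW, rfl⟩

lemma Derives.mono_rules {OR' : List ObjRule} {VR' : List ValRule}
    (h : Derives sim D E W OR VR α) (hOR : OR ⊆ OR') (hVR : VR ⊆ VR') :
    Derives sim D E W OR' VR' α := by
  cases α with
  | inl p =>
    obtain ⟨r, hr, hans⟩ := h
    exact ⟨r, hOR hr, hans⟩
  | inr p =>
    obtain ⟨r, hr, hans⟩ := h
    exact ⟨r, hVR hr, hans⟩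

lemma Derives.of_append {OR' : List ObjRule} {VR' : List ValRule}
    (h : Derives sim D E W (OR ++ OR') (VR ++ VR') α) :
    Derives sim D E W OR VR α ∨ Derives sim D E W OR' VR' α := by
  cases α with
  | inl p =>
    obtain ⟨r, hr, hans⟩ := h
    exact (List.mem_append.1 hr).imp (fun hr => ⟨r, hr, hans⟩) fun hr => ⟨r, hr, hans⟩
  | inr p =>
    obtain ⟨r, hr, hans⟩ := h
    exact (List.mem_append.1 hr).imp (fun hr => ⟨r, hr, hans⟩) fun hr => ⟨r, hr, hans⟩

lemma softApplicable_iff :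
    SoftApplicable sim D Sp E W α ↔
      ¬ Merged E W α ∧ Derives sim D E W Sp.softO Sp.softV α := by
  cases α <;> rfl

lemma satHard_iff :
    SatHard sim D Sp E W ↔ ∀ α, Derives sim D E W Sp.hardO Sp.hardV α → Merged E W α := by
  refine ⟨fun h α hα => ?_, fun h =>
    ⟨fun r hr o o' hans => h (.inl (o, o')) ⟨r, hr, hans⟩,
      fun r hr t t' hans => h (.inr ((t, r.i), (t', r.j))) ⟨r, hr, t, t', hans, rfl⟩⟩⟩
  cases α with
  | inl p =>
    obtain ⟨r, hr, hans⟩ := hα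
    exact h.1 r hr _ _ hans
  | inr p =>
    obtain ⟨r, hr, t, t', hans, rfl⟩ := hα
    exact h.2 r hr t t' hans

lemma subset_extendBy (α : Merge) :
    E ⊆ (extendBy S D E W α).1 ∧ W ⊆ (extendBy S D E W α).2 := by
  cases α
  exacts [⟨Set.subset_union_left.trans (subset_eqRel _ _), subset_rfl⟩,
    ⟨subset_rfl, Set.subset_union_left.trans (subset_eqRel _ _)⟩]

lemma merged_extendBy (α : Merge) : Merged (extendBy S D E W α).1 (extendBy S D E W α).2 α := by
  cases α
  exacts [subset_eqRel _ _ (Set.mem_union_right _ rfl),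
    subset_eqRel _ _ (Set.mem_union_right _ rfl)]

end Merge

section CandSol

variable {sim : SimFam} {S : Schema} {D : DB S} {Sp : ERSpec} {E E' : ERel} {W W' : VRel}
  {α : Merge}

abbrev ERSpec.objRules (Sp : ERSpec) : List ObjRule := Sp.hardO ++ Sp.softO

abbrev ERSpec.valRules (Sp : ERSpec) : List ValRule := Sp.hardV ++ Sp.softV

lemma ERSpec.WF.noNeq_objRules (h : Sp.WF S) : ∀ r ∈ Sp.objRules, NoNeq r.body := by
  intro r hr
  rcases List.mem_append.1 hr with hr | hr
  exacts [(h.1 r hr).1, (h.2.1 r hr).1]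

lemma ERSpec.WF.noNeq_valRules (h : Sp.WF S) : ∀ r ∈ Sp.valRules, NoNeq r.body := by
  intro r hr
  rcases List.mem_append.1 hr with hr | hr
  exacts [(h.2.2.1 r hr).1, (h.2.2.2.1 r hr).1]

lemma CandSol.extend (h : CandSol sim D Sp E W)
    (hα : Derives sim D E W Sp.objRules Sp.valRules α) :
    CandSol sim D Sp (extendBy S D E W α).1 (extendBy S D E W α).2 := by
  cases α with
  | inl p =>
    obtain ⟨r, hr, hans⟩ := hα
    exact .stepO r (List.mem_append.1 hr) h hans
  | inr p =>
    obtain ⟨r, hr, t, t', hans, rfl⟩ := hα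
    exact .stepV r (List.mem_append.1 hr) h hans

@[elab_as_elim]
theorem CandSol.induction_extendBy {motive : ERel → VRel → Prop} (h : CandSol sim D Sp E W)
    (base : motive (EqRel ∅ (ObjD S D)) (EqRel ∅ (CellsD S D)))
    (step : ∀ E W α, CandSol sim D Sp E W → Derives sim D E W Sp.objRules Sp.valRules α →
      motive E W → motive (LacePlus.extendBy S D E W α).1 (LacePlus.extendBy S D E W α).2) :
    motive E W := by
  induction h with
  | base => exact base
  | stepO r hr hc hans ih => exact step _ _ (.inl _) hc ⟨r, List.mem_append.2 hr, hans⟩ ih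
  | stepV r hr hc hans ih =>
    exact step _ _ (.inr _) hc ⟨r, List.mem_append.2 hr, _, _, hans, rfl⟩ ih

lemma CandSol.exists_eqRel (h : CandSol sim D Sp E W) :
    (∃ P, E = EqRel P (ObjD S D)) ∧ ∃ Q, W = EqRel Q (CellsD S D) := by
  refine h.induction_extendBy ⟨⟨_, rfl⟩, ⟨_, rfl⟩⟩ fun E W α _ _ ih => ?_
  cases α
  exacts [⟨⟨_, rfl⟩, ih.2⟩, ⟨ih.1, ⟨_, rfl⟩⟩]

lemma CandSol.extendBy_subset (h' : CandSol sim D Sp E' W') (hE : E ⊆ E') (hW : W ⊆ W')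
    (hα : Merged E' W' α) :
    (extendBy S D E W α).1 ⊆ E' ∧ (extendBy S D E W α).2 ⊆ W' := by
  obtain ⟨⟨P, rfl⟩, ⟨Q, rfl⟩⟩ := h'.exists_eqRel
  cases α
  exacts [⟨eqRel_subset_eqRel (Set.union_subset hE (Set.singleton_subset_iff.2 hα)), hW⟩,
    ⟨hE, eqRel_subset_eqRel (Set.union_subset hW (Set.singleton_subset_iff.2 hα))⟩]

/-- Follow the derivation of `⟨E',W'⟩` up to its first step that leaves `⟨E,W⟩`. -/
lemma CandSol.exists_softApplicable (hWF : Sp.WF S) (h' : CandSol sim D Sp E' W')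
    (h : CandSol sim D Sp E W) (hhard : SatHard sim D Sp E W) (hle : ¬ (E' ⊆ E ∧ W' ⊆ W)) :
    ∃ α, SoftApplicable sim D Sp E W α ∧ Merged E' W' α := by
  revert hle
  refine h'.induction_extendBy (fun hle => ?_) fun E'' W'' α _ hα ih hle => ?_
  · obtain ⟨⟨P, rfl⟩, ⟨Q, rfl⟩⟩ := h.exists_eqRel
    exact absurd ⟨eqRel_subset_eqRel (Set.empty_subset _),
      eqRel_subset_eqRel (Set.empty_subset _)⟩ hle
  · by_cases hsub : E'' ⊆ E ∧ W'' ⊆ W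
    · have hαEW := hα.mono hWF.noNeq_objRules hWF.noNeq_valRules hsub.1 hsub.2
      have hnot : ¬ Merged E W α := fun hm => hle (h.extendBy_subset hsub.1 hsub.2 hm)
      refine ⟨α, softApplicable_iff.2 ⟨hnot, ?_⟩, merged_extendBy α⟩
      exact hαEW.of_append.resolve_left fun hhard' => hnot (satHard_iff.1 hhard α hhard')
    · obtain ⟨β, hβ, hmem⟩ := ih hsub
      exact ⟨β, hβ, hmem.mono (subset_extendBy α).1 (subset_extendBy α).2⟩

end CandSol

/-- A maximal element of the finite set of candidate solutions above `⟨E0,W0⟩` and below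
every hard-rule model above `⟨E0,W0⟩` satisfies the hard rules: otherwise firing a
violated hard rule would stay in the set. -/
lemma exists_isHardClosure {sim : SimFam} {S : Schema} {D : DB S} {Sp : ERSpec}
    (hWF : Sp.WF S) {E0 : ERel} {W0 : VRel} (h0 : CandSol sim D Sp E0 W0) :
    ∃ Eh Wh, IsHardClosure sim D Sp E0 W0 Eh Wh := by
  let Below (x : ERel × VRel) : Prop := ∀ E W, CandSol sim D Sp E W → E0 ⊆ E → W0 ⊆ W →
    SatHard sim D Sp E W → x.1 ⊆ E ∧ x.2 ⊆ W
  let C := {x : ERel × VRel | CandSol sim D Sp x.1 x.2 ∧ E0 ⊆ x.1 ∧ W0 ⊆ x.2 ∧ Below x}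
  have hC : C.Finite := by
    refine ((finite_range_eqRel (finite_objD D)).prod
      (finite_range_eqRel (finite_cellsD D))).subset ?_
    rintro x ⟨hx, -⟩
    obtain ⟨⟨P, hP⟩, ⟨Q, hQ⟩⟩ := hx.exists_eqRel
    exact ⟨⟨P, hP.symm⟩, ⟨Q, hQ.symm⟩⟩
  have h0C : (E0, W0) ∈ C := ⟨h0, subset_rfl, subset_rfl, fun _ _ _ hE hW _ => ⟨hE, hW⟩⟩
  obtain ⟨⟨Eh, Wh⟩, ⟨hc, hE0, hW0, hbelow⟩, hmax⟩ := hC.exists_maximal ⟨_, h0C⟩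
  refine ⟨Eh, Wh, hc, hE0, hW0, satHard_iff.2 fun α hα => ?_, hbelow⟩
  by_contra hnot
  have hαall : Derives sim D Eh Wh Sp.objRules Sp.valRules α :=
    hα.mono_rules (List.subset_append_left _ _) (List.subset_append_left _ _)
  have hext : (extendBy S D Eh Wh α) ∈ C := by
    refine ⟨hc.extend hαall, hE0.trans (subset_extendBy α).1, hW0.trans (subset_extendBy α).2,
      fun E W hcEW hE hW hhard => ?_⟩
    obtain ⟨hEhE, hWhW⟩ := hbelow E W hcEW hE hW hhard
    refine hcEW.extendBy_subset hEhE hWhW (satHard_iff.1 hhard α ?_)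
    exact hα.mono (fun r hr => (hWF.1 r hr).1) (fun r hr => (hWF.2.2.1 r hr).1) hEhE hWhW
  have hle := hmax hext ⟨(subset_extendBy α).1, (subset_extendBy α).2⟩
  exact hnot ((merged_extendBy α).mono hle.1 hle.2)

theorem maxSol_characterization_general (sim : SimFam) {S : Schema} (D : DB S)
    (Sp : ERSpec) (hWF : Sp.WF S)
    (hdcs : ∀ δ ∈ Sp.dcs, NoNeq δ)
    (E : ERel) (W : VRel) (hsol : Solution sim D Sp E W) :
    MaxSolution sim D Sp E W ↔
      ∀ α, SoftApplicable sim D Sp E W α →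
        ∀ Ea Wa,
          IsHardClosure sim D Sp (extendBy S D E W α).1 (extendBy S D E W α).2 Ea Wa →
          ∃ δ ∈ Sp.dcs, Sat sim D Ea Wa δ := by
  have ⟨hcand, hhard, _⟩ := hsol
  refine ⟨fun ⟨_, hmax⟩ α hα Ea Wa hcl => ?_, fun hyp => ⟨hsol, ?_⟩⟩
  · by_contra! hno
    obtain ⟨hcl, hE, hW, hclhard, -⟩ := hcl
    have hαa : Merged Ea Wa α := (merged_extendBy α).mono hE hW
    exact hmax ⟨Ea, Wa, ⟨hcl, hclhard, hno⟩, (subset_extendBy α).1.trans hE,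
      (subset_extendBy α).2.trans hW,
      fun hle => (softApplicable_iff.1 hα).1 (hαa.mono hle.1 hle.2)⟩
  · rintro ⟨E', W', ⟨hcand', hhard', hdcs'⟩, hEE', hWW', hne⟩
    obtain ⟨α, hα, hmem⟩ := hcand'.exists_softApplicable hWF hcand hhard hne
    have hext := hcand.extend ((softApplicable_iff.1 hα).2.mono_rules
      (List.subset_append_right _ _) (List.subset_append_right _ _))
    obtain ⟨Ea, Wa, hcl⟩ := exists_isHardClosure hWF hext
    obtain ⟨δ, hδ, hsat⟩ := hyp α hα Ea Wa hcl
    obtain ⟨-, -, -, -, hleast⟩ := hcl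
    have hαE' := hcand'.extendBy_subset hEE' hWW' hmem
    obtain ⟨hEa, hWa⟩ := hleast E' W' hcand' hαE'.1 hαE'.2 hhard'
    exact hdcs' δ hδ (Sat.mono (hdcs δ hδ) hsat hEa hWa)

/-- Suppose no denial constraint of `Σ` contains inequality atoms and
`⟨E,V⟩ ∈ Sol(D,Σ)`. Then `⟨E,V⟩ ∈ MaxSol(D,Σ)` iff for every soft-applicable
pair `α` at `⟨E,V⟩`, the hard closure `⟨E_α,V_α⟩` of the candidate solution
obtained by adding `α` satisfies `D_{E_α,V_α} ⊭ Δ`. -/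
theorem maxSol_characterization (sim : SimFam) {S : Schema} (D : DB S)
    (hD : WellTyped S D) (Sp : ERSpec) (hWF : Sp.WF S)
    (hdcs : ∀ δ ∈ Sp.dcs, NoNeq δ)
    (E : ERel) (W : VRel) (hsol : Solution sim D Sp E W) :
    MaxSolution sim D Sp E W ↔
      ∀ α, SoftApplicable sim D Sp E W α →
        ∀ Ea Wa,
          IsHardClosure sim D Sp (extendBy S D E W α).1 (extendBy S D E W α).2 Ea Wa →
          ∃ δ ∈ Sp.dcs, Sat sim D Ea Wa δ :=
  maxSol_characterization_general sim D Sp hWF hdcs E W hsol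

end LacePlus
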